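/- Let n ≥ 6 and 0 ≤ j ≤ n−6, and let λ = [1^j, 2², n−j−4] be the partition of n with one part n−j−4, two parts equal to 2, and j parts equal to 1. Then for every integer m with 0 ≤ m ≤ n, (1/n!) · Σ_{d=0}^{m} (−1)^d C(m,d) ∏_{u∈λ} (m−d+c(u)) = (m(m−1)/(n(n−1))) · C(n−j−3, n−m), where the product runs over the cells u of the Young diagram of λ. -/
import Mathlib


open Polynomial
open scoped Classical

/-- The cycle type of a permutation of `Fin n` as a partition of `n`,
including fixed points as parts equal to `1`. -/
noncomputable def fullCycleType {n : ℕ} (σ : Equiv.Perm (Fin n)) : Multiset ℕ :=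
  σ.cycleType + Multiset.replicate (n - σ.cycleType.sum) 1

/-- The number of disjoint cycles of a permutation, fixed points included. -/
noncomputable def numCycles {n : ℕ} (σ : Equiv.Perm (Fin n)) : ℕ :=
  Multiset.card (fullCycleType σ)

/-- The set (conjugacy class) of permutations of `Fin n` with full cycle type `β`. -/
noncomputable def permClass (n : ℕ) (β : Multiset ℕ) : Finset (Equiv.Perm (Fin n)) :=
  Finset.univ.filter (fun ω => fullCycleType ω = β)

/-- The polynomial `P_{[2,n-2],β}(x) = (n(n-1)/|C_β|) ⬝ Σ_{ρ(ω)=β} x^{κ(αω)}`. -/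
noncomputable def Pperm {n : ℕ} (α : Equiv.Perm (Fin n)) (β : Multiset ℕ) : Polynomial ℚ :=
  Polynomial.C (((n : ℚ) * ((n : ℚ) - 1)) / ((permClass n β).card : ℚ)) *
    ∑ ω ∈ permClass n β, Polynomial.X ^ (numCycles (α * ω))

/-- The polynomial `binom(x + c, k)` in `x`: for `k ≥ 0` it is
`(x+c)(x+c-1)⋯(x+c-k+1)/k!`, and it is `0` for `k < 0`. -/
noncomputable def binomPoly (c k : ℤ) : Polynomial ℚ :=
  if 0 ≤ k then
    (((k.toNat).factorial : ℚ))⁻¹ •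
      ((descPochhammer ℚ k.toNat).comp (Polynomial.X + Polynomial.C (c : ℚ)))
  else 0

/-- The signless Stirling number of the first kind: the number of permutations of
an `N`-element set with exactly `m` cycles (fixed points included). -/
noncomputable def stirling1 (N m : ℕ) : ℕ :=
  (Finset.univ.filter (fun σ : Equiv.Perm (Fin N) => numCycles σ = m)).card

/-- For a Young diagram with row lengths `L` (rows and columns 0-indexed),
the product `∏_{u} (t + c(u))` over the cells `u`, `c(u)` being the content. -/
def contentProd (L : List ℕ) (t : ℤ) : ℤ :=
  ∏ i ∈ Finset.range L.length, ∏ j ∈ Finset.range (L.getD i 0), (t + (j : ℤ) - (i : ℤ))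

/-- `C(a, b)` for an integer `b`: the usual binomial coefficient when `b ≥ 0`
(which is `0` for `b > a`), and `0` when `b < 0`. -/
def chooseZ (a : ℕ) (b : ℤ) : ℚ := if 0 ≤ b then (a.choose b.toNat : ℚ) else 0

private lemma prod_desc (s : ℕ) : ∀ k : ℕ, ∏ r ∈ Finset.range k, ((s:ℤ) - r) = (s.descFactorial k : ℤ) := by
  intro k
  induction k with
  | zero => simp
  | succ k ih =>
    rw [Finset.prod_range_succ, ih, Nat.descFactorial_succ]
    rcases le_or_gt (k+1) s with h | h
    · push_cast [Nat.sub_add_cancel, h, Nat.le_of_succ_le h]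
      ring
    · rcases Nat.lt_succ_iff_lt_or_eq.mp h with h' | h'
      · rw [Nat.descFactorial_of_lt h']
        simp
      · subst h'; simp

private lemma choose_shift (m d : ℕ) (hd : d ≤ m) :
    ((m:ℚ) - d) * ((m:ℚ) - d - 1) * (m.choose d : ℚ)
      = (m:ℚ) * ((m:ℚ) - 1) * ((m-2).choose d : ℚ) := by
  rcases le_or_gt (d + 2) m with h | h
  · obtain ⟨e, rfl⟩ : ∃ e, m = d + e + 2 := ⟨m - d - 2, by omega⟩
    have h1 : d ≤ d + e + 2 := by omega
    have h2 : d ≤ d + e := by omega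
    have e3 : d + e + 2 - 2 = d + e := by omega
    rw [e3, Nat.cast_choose ℚ h1, Nat.cast_choose ℚ h2]
    have e1 : d + e + 2 - d = e + 2 := by omega
    have e2 : d + e - d = e := by omega
    rw [e1, e2]
    have f1 : ((d+e+2).factorial : ℚ) = (d+e+2) * (d+e+1) * ((d+e).factorial) := by
      rw [show d+e+2 = (d+e+1)+1 by ring, Nat.factorial_succ, Nat.factorial_succ]
      push_cast; ring
    have f2 : ((e+2).factorial : ℚ) = (e+2) * (e+1) * (e.factorial) := by
      rw [show e+2 = (e+1)+1 by ring, Nat.factorial_succ, Nat.factorial_succ]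
      push_cast; ring
    rw [f1, f2]
    have hd0 : (d.factorial : ℚ) ≠ 0 := by positivity
    have he0 : (e.factorial : ℚ) ≠ 0 := by positivity
    have hde0 : ((d+e).factorial : ℚ) ≠ 0 := by positivity
    field_simp
    push_cast
    ring
  · rcases (by omega : d = m ∨ d + 1 = m) with h' | h'
    · subst h'
      have hz : ((d:ℚ) - d) = 0 := by ring
      rcases Nat.lt_or_ge d 2 with h2 | h2
      · interval_cases d <;> norm_num
      · rw [Nat.choose_eq_zero_of_lt (by omega : d - 2 < d)]
        simp [hz]
    · have hc : (m:ℚ) = (d:ℚ) + 1 := by exact_mod_cast congrArg (Nat.cast : ℕ → ℚ) h'.symm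
      have hz : (m:ℚ) - d - 1 = 0 := by rw [hc]; ring
      rcases Nat.eq_zero_or_pos d with hd0 | hd0
      · subst hd0
        have : m = 1 := by omega
        subst this; norm_num
      · have hlt : m - 2 < d := by omega
        rw [Nat.choose_eq_zero_of_lt hlt, hz]
        simp

private lemma star (c : ℕ) : ∀ (e k : ℕ),
    ∑ d ∈ Finset.range (e+1), (-1:ℚ)^d * (e.choose d : ℚ) * (((e-d+c).choose k : ℚ))
      = if e ≤ k then ((c.choose (k-e) : ℚ)) else 0 := by
  intro e
  induction e with
  | zero => intro k; simp
  | succ e ih =>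
    intro k
    rcases k with _ | k'
    · rw [if_neg (by omega)]
      have h2 : ((∑ i ∈ Finset.range (e + 1 + 1), (-1) ^ i * ((e+1).choose i : ℤ) : ℤ) : ℚ) = 0 := by
        rw [Int.alternating_sum_range_choose_of_ne (Nat.succ_ne_zero e)]; simp
      push_cast at h2
      rw [← h2]
      apply Finset.sum_congr rfl; intro d _; simp
    · have key : ∑ d ∈ Finset.range (e+1+1), (-1:ℚ)^d * ((e+1).choose d : ℚ) * (((e+1-d+c).choose (k'+1) : ℚ))
          = ∑ d ∈ Finset.range (e+1), (-1:ℚ)^d * (e.choose d : ℚ) * (((e-d+c).choose (k'+1) : ℚ))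
            + (∑ d ∈ Finset.range (e+1), (-1:ℚ)^(d+1) * (e.choose d : ℚ) * (((e-d+c).choose (k'+1) : ℚ))
               + ∑ d ∈ Finset.range (e+1), (-1:ℚ)^d * (e.choose d : ℚ) * (((e-d+c).choose k' : ℚ))) := by
        rw [Finset.sum_range_succ' _ (e+1)]
        have hsplit : ∀ d ∈ Finset.range (e+1),
            (-1:ℚ)^(d+1) * ((e+1).choose (d+1) : ℚ) * (((e+1-(d+1)+c).choose (k'+1) : ℚ))
            = (-1:ℚ)^(d+1) * (e.choose d : ℚ) * (((e-d+c).choose (k'+1) : ℚ))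
              + (-1:ℚ)^(d+1) * (e.choose (d+1) : ℚ) * (((e-d+c).choose (k'+1) : ℚ)) := by
          intro d hd
          have h1 : e+1-(d+1) = e - d := by omega
          rw [h1, Nat.choose_succ_succ]
          push_cast; ring
        rw [Finset.sum_congr rfl hsplit, Finset.sum_add_distrib]
        -- now goal: S1 + S2 + F0 = Sb + (Sa + Sc)
        -- where S2 + F0 = Σ_{d∈range(e+1)} (-1)^d C(e,d) C(e+1-d+c,k'+1)  (call it T)
        -- and T = Sb + Sc termwise by Pascal.
        have hT : ∑ d ∈ Finset.range (e+1), (-1:ℚ)^(d+1) * (e.choose (d+1) : ℚ) * (((e-d+c).choose (k'+1) : ℚ))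
              + (-1:ℚ)^0 * ((e+1).choose 0 : ℚ) * (((e+1-0+c).choose (k'+1) : ℚ))
            = ∑ d ∈ Finset.range (e+1+1), (-1:ℚ)^d * (e.choose d : ℚ) * (((e+1-d+c).choose (k'+1) : ℚ)) := by
          rw [Finset.sum_range_succ' _ (e+1)]
          congr 1
          · apply Finset.sum_congr rfl
            intro d hd
            have h1 : e+1-(d+1) = e - d := by omega
            rw [h1]
          · simp
        have hdrop : ∑ d ∈ Finset.range (e+1+1), (-1:ℚ)^d * (e.choose d : ℚ) * (((e+1-d+c).choose (k'+1) : ℚ))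
            = ∑ d ∈ Finset.range (e+1), (-1:ℚ)^d * (e.choose d : ℚ) * (((e+1-d+c).choose (k'+1) : ℚ)) := by
          rw [Finset.sum_range_succ, Nat.choose_succ_self]
          simp
        have hpascal : ∑ d ∈ Finset.range (e+1), (-1:ℚ)^d * (e.choose d : ℚ) * (((e+1-d+c).choose (k'+1) : ℚ))
            = ∑ d ∈ Finset.range (e+1), (-1:ℚ)^d * (e.choose d : ℚ) * (((e-d+c).choose (k'+1) : ℚ))
              + ∑ d ∈ Finset.range (e+1), (-1:ℚ)^d * (e.choose d : ℚ) * (((e-d+c).choose k' : ℚ)) := by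
          rw [← Finset.sum_add_distrib]
          apply Finset.sum_congr rfl
          intro d hd
          have hdle : d ≤ e := by simpa [Nat.lt_succ_iff] using hd
          have h1 : e + 1 - d + c = (e - d + c) + 1 := by omega
          rw [h1, Nat.choose_succ_succ]
          push_cast; ring
        have := hT.trans (hdrop.trans hpascal)
        linarith [this]
      rw [key]
      have hcancel : ∑ d ∈ Finset.range (e+1), (-1:ℚ)^(d+1) * (e.choose d : ℚ) * (((e-d+c).choose (k'+1) : ℚ))
          = - ∑ d ∈ Finset.range (e+1), (-1:ℚ)^d * (e.choose d : ℚ) * (((e-d+c).choose (k'+1) : ℚ)) := by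
        rw [← Finset.sum_neg_distrib]
        apply Finset.sum_congr rfl
        intro d _
        ring
      rw [hcancel, ih k']
      have hik : (if e ≤ k'+1 then ((c.choose (k'+1-e) : ℚ)) else 0) = ∑ d ∈ Finset.range (e+1), (-1:ℚ)^d * (e.choose d : ℚ) * (((e-d+c).choose (k'+1) : ℚ)) := (ih (k'+1)).symm
      by_cases h : e ≤ k'
      · rw [if_pos (by omega : e + 1 ≤ k' + 1)]
        have he : k' + 1 - (e+1) = k' - e := by omega
        rw [he, if_pos h]
        ring
      · rw [if_neg h, if_neg (by omega : ¬ (e + 1 ≤ k' + 1))]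
        ring

private lemma contentProd_eq (a j : ℕ) (t : ℤ) :
    contentProd (a :: 2 :: 2 :: List.replicate j 1) t
      = t * (t - 1) * ∏ r ∈ Finset.range (a + 2 + j), (t + a - 1 - r) := by
  unfold contentProd
  have hlen : (a :: 2 :: 2 :: List.replicate j 1).length = 3 + j := by
    simp [List.length_replicate]; omega
  rw [hlen, Finset.prod_range_add]
  have h3 : ∏ i ∈ Finset.range 3, ∏ jj ∈ Finset.range ((a :: 2 :: 2 :: List.replicate j 1).getD i 0), (t + jj - i)
      = (∏ jj ∈ Finset.range a, (t + jj)) * ((t - 1) * t) * ((t - 2) * (t - 1)) := by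
    rw [Finset.prod_range_succ, Finset.prod_range_succ, Finset.prod_range_succ, Finset.prod_range_zero]
    simp only [List.getD_cons_zero, List.getD_cons_succ]
    rw [show (2:ℕ) = 1 + 1 from rfl]
    rw [Finset.prod_range_succ (fun jj => t + jj - (1:ℕ)), Finset.prod_range_succ (fun jj => t + jj - (2:ℕ))]
    rw [Finset.prod_range_one, Finset.prod_range_one]
    push_cast
    ring
  have htail : ∏ i ∈ Finset.range j, ∏ jj ∈ Finset.range ((a :: 2 :: 2 :: List.replicate j 1).getD (3 + i) 0), (t + jj - ((3 + i : ℕ) : ℤ))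
      = ∏ i ∈ Finset.range j, (t - 3 - i) := by
    apply Finset.prod_congr rfl
    intro i hi
    have : (a :: 2 :: 2 :: List.replicate j 1).getD (3 + i) 0 = 1 := by
      simp only [List.getD_cons_succ, show 3 + i = (((i+1)-1)+1)+1+1 by omega]
      rw [List.getD_eq_getElem?_getD, List.getElem?_replicate]
      simp [Finset.mem_range.mp hi]
    rw [this, Finset.prod_range_succ, Finset.prod_range_zero]
    push_cast; ring
  rw [h3, htail]
  have hrhs : ∏ r ∈ Finset.range (a + 2 + j), (t + a - 1 - r)
      = (∏ r ∈ Finset.range (a + 2), (t + a - 1 - r)) * ∏ r ∈ Finset.range j, (t + a - 1 - ((a + 2 + r : ℕ) : ℤ)) := by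
    rw [Finset.prod_range_add]
  have hhead : ∏ r ∈ Finset.range (a + 2), (t + a - 1 - r)
      = (∏ r ∈ Finset.range a, (t + a - 1 - r)) * ((t - 1) * (t - 2)) := by
    rw [Finset.prod_range_add]
    congr 1
    rw [Finset.prod_range_succ, Finset.prod_range_succ, Finset.prod_range_zero]
    push_cast; ring
  have hrefl : ∏ r ∈ Finset.range a, (t + a - 1 - r) = ∏ jj ∈ Finset.range a, (t + jj) := by
    rw [← Finset.prod_range_reflect]
    apply Finset.prod_congr rfl
    intro r hr
    have h1 : r < a := Finset.mem_range.mp hr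
    have : ((a - 1 - r : ℕ) : ℤ) = (a : ℤ) - 1 - r := by omega
    rw [this]
    ring
  have htail2 : ∏ r ∈ Finset.range j, (t + a - 1 - ((a + 2 + r : ℕ) : ℤ)) = ∏ i ∈ Finset.range j, (t - 3 - i) := by
    apply Finset.prod_congr rfl
    intro r hr
    push_cast; ring
  rw [hrhs, hhead, hrefl, htail2]
  ring

/-- the normalized character sum for `λ = [1^j, 2², n−j−4]` equals
`(m(m−1)/(n(n−1)))·C(n−j−3, n−m)`. -/
theorem content_sum_two_two (n j m : ℕ) (hn : 6 ≤ n) (hj : j ≤ n - 6) (hm : m ≤ n) :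
    ((n.factorial : ℚ))⁻¹ *
      ∑ d ∈ Finset.range (m + 1), (-1 : ℚ) ^ d * (m.choose d : ℚ) *
        ((contentProd ((n - j - 4) :: 2 :: 2 :: List.replicate j 1) ((m : ℤ) - (d : ℤ))) : ℚ) =
    ((m : ℚ) * ((m : ℚ) - 1) / ((n : ℚ) * ((n : ℚ) - 1))) *
      chooseZ (n - j - 3) ((n : ℤ) - m) := by
  set a := n - j - 4 with ha_def
  have ha : 2 ≤ a := by omega
  have han : a + j + 4 = n := by omega
  have hterm : ∀ d ∈ Finset.range (m+1),
      (-1 : ℚ) ^ d * (m.choose d : ℚ) *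
        ((contentProd (a :: 2 :: 2 :: List.replicate j 1) ((m : ℤ) - (d : ℤ))) : ℚ)
      = ((m:ℚ) * ((m:ℚ) - 1) * (((n-2).factorial : ℚ))) *
          ((-1:ℚ)^d * (((m-2).choose d : ℚ)) * (((m - d + a - 1).choose (n-2) : ℚ))) := by
    intro d hd
    have hdm : d ≤ m := by
      have := Finset.mem_range.mp hd; omega
    rw [contentProd_eq a j ((m : ℤ) - (d : ℤ))]
    have hprod : ∏ r ∈ Finset.range (a + 2 + j), ((m : ℤ) - (d : ℤ) + a - 1 - r)
        = ((m - d + a - 1).descFactorial (n-2) : ℤ) := by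
      rw [show a + 2 + j = n - 2 by omega, ← prod_desc (m - d + a - 1) (n-2)]
      apply Finset.prod_congr rfl
      intro r _
      have h1 : ((m - d + a - 1 : ℕ) : ℤ) = (m : ℤ) - d + a - 1 := by omega
      rw [h1]
    rw [hprod, Nat.descFactorial_eq_factorial_mul_choose]
    push_cast
    have hcs := choose_shift m d hdm
    linear_combination ((-1:ℚ)^d * (((n-2).factorial : ℚ)) * (((m - d + a - 1).choose (n-2) : ℚ))) * hcs
  rw [Finset.sum_congr rfl hterm, ← Finset.mul_sum]
  rcases Nat.lt_or_ge m 2 with h2 | h2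
  · interval_cases m <;> norm_num
  · -- m ≥ 2
    have hS : ∑ d ∈ Finset.range (m+1), (-1:ℚ)^d * (((m-2).choose d : ℚ)) * (((m - d + a - 1).choose (n-2) : ℚ))
        = ((a+1).choose (n-m) : ℚ) := by
      have htr : ∑ d ∈ Finset.range (m-1), (-1:ℚ)^d * (((m-2).choose d : ℚ)) * (((m - d + a - 1).choose (n-2) : ℚ))
          = ∑ d ∈ Finset.range (m+1), (-1:ℚ)^d * (((m-2).choose d : ℚ)) * (((m - d + a - 1).choose (n-2) : ℚ)) := by
        apply Finset.sum_subset
        · intro x hx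
          simp only [Finset.mem_range] at *
          omega
        · intro x hx hnx
          simp only [Finset.mem_range] at hx hnx
          rw [Nat.choose_eq_zero_of_lt (by omega : m - 2 < x)]
          simp
      rw [← htr, show m - 1 = (m-2) + 1 by omega]
      have hcong : ∀ d ∈ Finset.range ((m-2)+1),
          (-1:ℚ)^d * (((m-2).choose d : ℚ)) * (((m - d + a - 1).choose (n-2) : ℚ))
          = (-1:ℚ)^d * (((m-2).choose d : ℚ)) * ((((m-2) - d + (a+1)).choose (n-2) : ℚ)) := by
        intro d hd
        have hdd : d ≤ m - 2 := by
          have := Finset.mem_range.mp hd; omega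
        rw [show m - d + a - 1 = (m-2) - d + (a+1) by omega]
      rw [Finset.sum_congr rfl hcong, star (a+1) (m-2) (n-2), if_pos (by omega : m - 2 ≤ n - 2),
        show n - 2 - (m - 2) = n - m by omega]
    rw [hS]
    -- final arithmetic
    rw [chooseZ, if_pos (by omega : (0:ℤ) ≤ (n:ℤ) - m)]
    rw [show ((n:ℤ) - m).toNat = n - m by omega, show n - j - 3 = a + 1 by omega]
    obtain ⟨k, rfl⟩ : ∃ k, n = k + 2 := ⟨n - 2, by omega⟩
    rw [show k + 2 - 2 = k by omega]
    rw [show (k+2).factorial = (k+2) * ((k+1) * k.factorial) by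
      rw [Nat.factorial_succ, Nat.factorial_succ]]
    have hk0 : (k.factorial : ℚ) ≠ 0 := by positivity
    have h1 : ((k:ℚ) + 2) ≠ 0 := by positivity
    have h2' : ((k:ℚ) + 1) ≠ 0 := by positivity
    have hy : (((k:ℚ)+2) * (((k:ℚ)+2) - 1)) ≠ 0 := by
      have hyy : ((k:ℚ)+2) * (((k:ℚ)+2) - 1) = ((k:ℚ)+2) * ((k:ℚ)+1) := by ring
      rw [hyy]; positivity
    have hz : (((k:ℚ)+2) * (((k:ℚ)+1) * (k.factorial : ℚ))) ≠ 0 := by positivity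
    push_cast
    rw [inv_mul_eq_div, div_mul_eq_mul_div, div_eq_div_iff hz hy]
    ring
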